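/- For every k ≥ 2 and every n with 2^{k−1} − 1 < n < 2^k − 1, there exists a Boolean function f on n variables, all of whose variables are influencing, that is computed by a parity decision tree of depth k − 1 (while, since n > 2^{k−1} − 1, every deterministic decision tree computing f has depth at least k). -/

import Mathlib

/-!
A decision tree of depth `D` reads at most `2 ^ D - 1` distinct variables, and it must read every
influencing variable of the function it computes; so with `n ≥ 2 ^ (k - 1)` influencing variables
its depth is at least `k`. Conversely, the `2 ^ d - 1` internal nodes of a complete parity decision
tree of depth `d` can each query one or two fresh variables, which covers any number of variables
from `2 ^ d - 1` to `2 ^ (d + 1) - 2`. Labelling the leaves so that the two subtrees of every node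
take opposite values on the all-false input makes every queried variable influencing.
-/

/-- A deterministic decision tree over `n` Boolean variables: either a leaf
labelled by a `Bool`, or an internal node querying a variable with two subtrees. -/
inductive DTree (n : ℕ) where
  | leaf : Bool → DTree n
  | node : Fin n → DTree n → DTree n → DTree n

namespace DTree

/-- Evaluation of a decision tree on an input. -/
def eval {n : ℕ} : DTree n → (Fin n → Bool) → Bool
  | leaf b, _ => b
  | node i t0 t1, x => if x i then eval t1 x else eval t0 x

/-- The depth of a decision tree: the maximum number of internal nodes on a
root-to-leaf path. -/
def depth {n : ℕ} : DTree n → ℕ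
  | leaf _ => 0
  | node _ t0 t1 => max (depth t0) (depth t1) + 1

/-- A decision tree computes `f` if its evaluation agrees with `f` on all inputs. -/
def Computes {n : ℕ} (T : DTree n) (f : (Fin n → Bool) → Bool) : Prop :=
  ∀ x, T.eval x = f x

end DTree

/-- Variable `i` is influencing for `f`: there are inputs differing only in
coordinate `i` on which `f` takes different values. -/
def Influences {n : ℕ} (f : (Fin n → Bool) → Bool) (i : Fin n) : Prop :=
  ∃ x x' : Fin n → Bool, (∀ j, j ≠ i → x j = x' j) ∧ f x ≠ f x'

/-- A parity decision tree over `n` Boolean variables: either a leaf labelled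
by a `Bool`, or an internal node querying a single variable `x i` or the
parity `x i XOR x j` of two variables, with two subtrees. -/
inductive PDTree (n : ℕ) where
  | leaf : Bool → PDTree n
  | node1 : Fin n → PDTree n → PDTree n → PDTree n
  | node2 : Fin n → Fin n → PDTree n → PDTree n → PDTree n

namespace PDTree

/-- Evaluation of a parity decision tree on an input. -/
def eval {n : ℕ} : PDTree n → (Fin n → Bool) → Bool
  | leaf b, _ => b
  | node1 i t0 t1, x => if x i then eval t1 x else eval t0 x
  | node2 i j t0 t1, x => if xor (x i) (x j) then eval t1 x else eval t0 x

/-- The depth of a parity decision tree. -/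
def depth {n : ℕ} : PDTree n → ℕ
  | leaf _ => 0
  | node1 _ t0 t1 => max (depth t0) (depth t1) + 1
  | node2 _ _ t0 t1 => max (depth t0) (depth t1) + 1

/-- A parity decision tree computes `f` if its evaluation agrees with `f`. -/
def Computes {n : ℕ} (P : PDTree n) (f : (Fin n → Bool) → Bool) : Prop :=
  ∀ x, P.eval x = f x

end PDTree

theorem Influences.of_comp_update {n : ℕ} {f : (Fin n → Bool) → Bool} {i v : Fin n} {a : Bool}
    (h : Influences (fun x => f (Function.update x i a)) v) : Influences f v := by
  obtain ⟨x, x', hxx', hne⟩ := h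
  refine ⟨Function.update x i a, Function.update x' i a, fun j hj => ?_, hne⟩
  rcases eq_or_ne j i with rfl | hji
  · simp
  · simp [Function.update_of_ne hji, hxx' j hj]

theorem influences_of_update_ne {n : ℕ} {f : (Fin n → Bool) → Bool} {i : Fin n}
    {x : Fin n → Bool} (h : f (Function.update x i false) ≠ f (Function.update x i true)) :
    Influences f i :=
  ⟨_, _, fun j hj => by simp [Function.update_of_ne hj], h⟩

namespace DTree

variable {n : ℕ}

def vars : DTree n → Finset (Fin n)
  | leaf _ => ∅
  | node i t0 t1 => insert i (t0.vars ∪ t1.vars)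

theorem card_vars_le (T : DTree n) : T.vars.card ≤ 2 ^ T.depth - 1 := by
  induction T with
  | leaf b => simp [vars]
  | node i t0 t1 ih0 ih1 =>
    have hcard : (node i t0 t1).vars.card ≤ t0.vars.card + t1.vars.card + 1 :=
      (Finset.card_insert_le _ _).trans (by gcongr; exact Finset.card_union_le _ _)
    have h0 : 2 ^ t0.depth ≤ 2 ^ max t0.depth t1.depth :=
      Nat.pow_le_pow_right two_pos (le_max_left _ _)
    have h1 : 2 ^ t1.depth ≤ 2 ^ max t0.depth t1.depth :=
      Nat.pow_le_pow_right two_pos (le_max_right _ _)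
    have : 0 < 2 ^ t0.depth := Nat.two_pow_pos _
    have : 0 < 2 ^ t1.depth := Nat.two_pow_pos _
    rw [depth, pow_succ]
    omega

theorem eval_congr (T : DTree n) {x y : Fin n → Bool} (h : ∀ i ∈ T.vars, x i = y i) :
    T.eval x = T.eval y := by
  induction T with
  | leaf b => rfl
  | node i t0 t1 ih0 ih1 =>
    simp only [vars, Finset.mem_insert, Finset.mem_union] at h
    simp only [eval, h i (Or.inl rfl), ih0 fun j hj => h j (by tauto),
      ih1 fun j hj => h j (by tauto)]

theorem mem_vars_of_influences {T : DTree n} {f : (Fin n → Bool) → Bool} (hT : T.Computes f)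
    {i : Fin n} (hi : Influences f i) : i ∈ T.vars := by
  obtain ⟨x, x', hxx', hne⟩ := hi
  by_contra hiT
  exact hne (by rw [← hT x, ← hT x']; exact T.eval_congr fun j hj => hxx' j (by grind))

theorem card_lt_two_pow_depth {T : DTree n} {f : (Fin n → Bool) → Bool} (hT : T.Computes f)
    (hf : ∀ i, Influences f i) : n < 2 ^ T.depth := by
  have hvars : T.vars = Finset.univ :=
    Finset.eq_univ_iff_forall.mpr fun i => mem_vars_of_influences hT (hf i)
  have := T.card_vars_le
  rw [hvars, Finset.card_univ, Fintype.card_fin] at this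
  have := Nat.two_pow_pos T.depth
  omega

end DTree

namespace PDTree

variable {n : ℕ}

def vars : PDTree n → Finset (Fin n)
  | leaf _ => ∅
  | node1 i t0 t1 => insert i (t0.vars ∪ t1.vars)
  | node2 i j t0 t1 => insert i (insert j (t0.vars ∪ t1.vars))

theorem eval_update_of_notMem_vars {T : PDTree n} {i : Fin n} (hi : i ∉ T.vars)
    (x : Fin n → Bool) (a : Bool) : T.eval (Function.update x i a) = T.eval x := by
  induction T with
  | leaf b => rfl
  | node1 k t0 t1 ih0 ih1 =>
    simp only [vars, Finset.mem_insert, Finset.mem_union, not_or] at hi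
    simp [eval, Function.update_of_ne (Ne.symm hi.1), ih0 hi.2.1, ih1 hi.2.2]
  | node2 k l t0 t1 ih0 ih1 =>
    simp only [vars, Finset.mem_insert, Finset.mem_union, not_or] at hi
    simp [eval, Function.update_of_ne (Ne.symm hi.1), Function.update_of_ne (Ne.symm hi.2.1),
      ih0 hi.2.2.1, ih1 hi.2.2.2]

section Nodes

variable {i j v : Fin n} {t0 t1 : PDTree n}

theorem influences_node1_of_left (hi : i ∉ t0.vars) (h : Influences t0.eval v) :
    Influences (node1 i t0 t1).eval v := by
  refine Influences.of_comp_update (i := i) (a := false) ?_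
  convert h using 2 with x
  simp [eval, eval_update_of_notMem_vars hi]

theorem influences_node1_of_right (hi : i ∉ t1.vars) (h : Influences t1.eval v) :
    Influences (node1 i t0 t1).eval v := by
  refine Influences.of_comp_update (i := i) (a := true) ?_
  convert h using 2 with x
  simp [eval, eval_update_of_notMem_vars hi]

theorem influences_node1_self (h0 : i ∉ t0.vars) (h1 : i ∉ t1.vars) {x : Fin n → Bool}
    (hx : t0.eval x ≠ t1.eval x) : Influences (node1 i t0 t1).eval i :=
  influences_of_update_ne (x := x) <| by
    simpa [eval, eval_update_of_notMem_vars h0, eval_update_of_notMem_vars h1] using hx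

theorem influences_node2_of_node1 (hj : j ∉ (node1 i t0 t1).vars)
    (h : Influences (node1 i t0 t1).eval v) : Influences (node2 i j t0 t1).eval v := by
  refine Influences.of_comp_update (i := j) (a := false) ?_
  convert h using 2 with x
  rw [← eval_update_of_notMem_vars hj x false]
  simp [eval]

theorem eval_node2_comm : (node2 i j t0 t1).eval = (node2 j i t0 t1).eval := by
  funext x
  simp [eval, Bool.xor_comm]

end Nodes

/-- The root queries one or two variables of `vs`, leaving an even number that is split equally
between the two subtrees. -/
def balanced : ℕ → List (Fin n) → Bool → PDTree n
  | 0, _, b => leaf b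
  | _ + 1, [], b => leaf b
  | d + 1, i :: vs, b =>
    if Even vs.length then
      node1 i (balanced d (vs.take (vs.length / 2)) b) (balanced d (vs.drop (vs.length / 2)) !b)
    else
      match vs with
      | [] => leaf b -- unreachable: `vs` has odd length
      | j :: ws =>
        node2 i j (balanced d (ws.take (ws.length / 2)) b)
          (balanced d (ws.drop (ws.length / 2)) !b)

theorem eval_balanced_false (d : ℕ) (vs : List (Fin n)) (b : Bool) :
    (balanced d vs b).eval (fun _ => false) = b := by
  induction d generalizing vs b with
  | zero => rfl
  | succ d ih =>
    rcases vs with _ | ⟨i, vs⟩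
    · rfl
    simp only [balanced]
    split_ifs
    · simp [eval, ih]
    · split <;> simp [eval, ih]

theorem vars_balanced_subset (d : ℕ) (vs : List (Fin n)) (b : Bool) :
    ∀ v ∈ (balanced d vs b).vars, v ∈ vs := by
  induction d generalizing vs b with
  | zero => simp [balanced, vars]
  | succ d ih =>
    rcases vs with _ | ⟨i, vs⟩
    · simp [balanced, vars]
    simp only [balanced]
    split_ifs
    · simp only [vars, Finset.mem_insert, Finset.mem_union]
      grind [List.mem_of_mem_take, List.mem_of_mem_drop]
    · split
      · simp [vars]
      · simp only [vars, Finset.mem_insert, Finset.mem_union]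
        grind [List.mem_of_mem_take, List.mem_of_mem_drop]

theorem depth_balanced {d : ℕ} {vs : List (Fin n)} (h : 2 ^ d - 1 ≤ vs.length) (b : Bool) :
    (balanced d vs b).depth = d := by
  induction d generalizing vs b with
  | zero => rfl
  | succ d ih =>
    have := Nat.two_pow_pos d
    rw [pow_succ] at h
    rcases vs with _ | ⟨i, vs⟩
    · simp at h; omega
    simp only [balanced]
    split_ifs with heven
    · simp only [List.length_cons] at h
      rw [depth, ih (by simp; omega), ih (by simp; omega), max_self]
    · rcases vs with _ | ⟨j, ws⟩
      · simp at heven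
      simp only [List.length_cons, Nat.even_add_one, not_not, Nat.even_iff] at h heven
      rw [depth, ih (by simp; omega), ih (by simp; omega), max_self]

theorem influences_node1_halves {d : ℕ}
    (ih : ∀ {vs : List (Fin n)}, vs.Nodup → vs.length ≤ 2 ^ (d + 1) - 2 →
      ∀ b, ∀ v ∈ vs, Influences (balanced d vs b).eval v)
    {i : Fin n} {ws : List (Fin n)} (hws : (i :: ws).Nodup) (hlen : ws.length ≤ 2 ^ (d + 2) - 4)
    (b : Bool) :
    ∀ v ∈ i :: ws, Influences (node1 i (balanced d (ws.take (ws.length / 2)) b)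
      (balanced d (ws.drop (ws.length / 2)) !b)).eval v := by
  rw [List.nodup_cons] at hws
  have hi0 : i ∉ (balanced d (ws.take (ws.length / 2)) b).vars := fun h =>
    hws.1 (List.mem_of_mem_take (vars_balanced_subset _ _ _ _ h))
  have hi1 : i ∉ (balanced d (ws.drop (ws.length / 2)) !b).vars := fun h =>
    hws.1 (List.mem_of_mem_drop (vars_balanced_subset _ _ _ _ h))
  have := Nat.two_pow_pos d
  rw [pow_succ] at hlen
  intro v hv
  rw [← List.take_append_drop (ws.length / 2) ws, List.mem_cons, List.mem_append] at hv
  rcases hv with rfl | hv | hv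
  · exact influences_node1_self hi0 hi1 (x := fun _ => false) (by simp [eval_balanced_false])
  · exact influences_node1_of_left hi0
      (ih (hws.2.sublist (List.take_sublist _ _)) (by simp; omega) _ v hv)
  · exact influences_node1_of_right hi1
      (ih (hws.2.sublist (List.drop_sublist _ _)) (by simp; omega) _ v hv)

theorem influences_eval_balanced {d : ℕ} {vs : List (Fin n)} (hvs : vs.Nodup)
    (hlen : vs.length ≤ 2 ^ (d + 1) - 2) (b : Bool) :
    ∀ v ∈ vs, Influences (balanced d vs b).eval v := by
  induction d generalizing vs b with
  | zero =>
    obtain rfl : vs = [] := by simpa using hlen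
    simp
  | succ d ih =>
    have := Nat.two_pow_pos d
    rw [pow_succ, pow_succ] at hlen
    rcases vs with _ | ⟨i, vs⟩
    · simp
    simp only [balanced]
    split_ifs with heven
    · refine influences_node1_halves ih hvs ?_ b
      simp only [List.length_cons, Nat.even_iff] at hlen heven
      rw [pow_succ, pow_succ]
      omega
    rcases vs with _ | ⟨j, ws⟩
    · simp at heven
    simp only [List.length_cons, Nat.even_add_one, not_not, Nat.even_iff] at hlen heven
    have hlen' : ws.length ≤ 2 ^ (d + 2) - 4 := by rw [pow_succ, pow_succ]; omega
    have hnode1 : ∀ k, node1 k (balanced d (ws.take (ws.length / 2)) b)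
        (balanced d (ws.drop (ws.length / 2)) !b) = balanced (d + 1) (k :: ws) b := by
      simp [balanced, Nat.even_iff, heven]
    obtain ⟨⟨hij, hi⟩, hj, hws⟩ : (i ≠ j ∧ i ∉ ws) ∧ j ∉ ws ∧ ws.Nodup := by simpa using hvs
    have hj' : j ∉ (balanced (d + 1) (i :: ws) b).vars := fun h => by
      simpa [hij.symm, hj] using vars_balanced_subset _ _ _ _ h
    have hi' : i ∉ (balanced (d + 1) (j :: ws) b).vars := fun h => by
      simpa [hij, hi] using vars_balanced_subset _ _ _ _ h
    intro v hv
    obtain rfl | hv : v = j ∨ v ∈ i :: ws := by simp only [List.mem_cons] at hv ⊢; tauto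
    · rw [eval_node2_comm]
      exact influences_node2_of_node1 (hnode1 v ▸ hi')
        (influences_node1_halves ih (by simp [hj, hws]) hlen' b _ (.head _))
    · exact influences_node2_of_node1 (hnode1 i ▸ hj')
        (influences_node1_halves ih (by simp [hi, hws]) hlen' b v hv)

end PDTree

theorem stmt8_general (k n : ℕ)
    (h1 : 2 ^ (k - 1) - 1 < n) (h2 : n < 2 ^ k - 1) :
    ∃ f : (Fin n → Bool) → Bool,
      (∀ i, Influences f i) ∧
      (∃ P : PDTree n, P.depth = k - 1 ∧ P.Computes f) ∧
      (∀ T : DTree n, T.Computes f → k ≤ T.depth) := by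
  obtain ⟨d, rfl⟩ : ∃ d, k = d + 1 := ⟨k - 1, by grind⟩
  rw [Nat.add_sub_cancel] at h1 ⊢
  set P := PDTree.balanced d (List.finRange n) false
  have hP : ∀ i, Influences P.eval i := fun i =>
    PDTree.influences_eval_balanced (List.nodup_finRange n) (by simp; omega) false i
      (List.mem_finRange i)
  refine ⟨P.eval, hP, ⟨P, PDTree.depth_balanced (by simp; omega) false, fun _ => rfl⟩,
    fun T hT => ?_⟩
  have hlt : 2 ^ d < 2 ^ T.depth := by
    have := T.card_lt_two_pow_depth hT hP
    omega
  exact (Nat.pow_lt_pow_iff_right (by norm_num)).mp hlt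

/-- for `2^(k-1) - 1 < n < 2^k - 1` there is a Boolean function on
`n` variables, all influencing, computed by a parity decision tree of depth
`k - 1`, while every deterministic decision tree computing it has depth at
least `k`. -/
theorem stmt8 (k n : ℕ) (hk : 2 ≤ k)
    (h1 : 2 ^ (k - 1) - 1 < n) (h2 : n < 2 ^ k - 1) :
    ∃ f : (Fin n → Bool) → Bool,
      (∀ i, Influences f i) ∧
      (∃ P : PDTree n, P.depth = k - 1 ∧ P.Computes f) ∧
      (∀ T : DTree n, T.Computes f → k ≤ T.depth) :=
  stmt8_general k n h1 h2
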